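/- arXiv:1604.05645 — 4 statements merged into one kernel-verified Lean document; each statement's English description precedes it below -/
import Mathlib

section
/- Let n ≥ 1 and let φ : ℝⁿ → ℝ be continuous and ℤⁿ-periodic (φ(x + m) = φ(x) for all m ∈ ℤⁿ). Define φ^c : ℝⁿ → ℝ by φ^c(y) = sup_{x ∈ ℝⁿ} (−(1/2) inf_{m ∈ ℤⁿ} |x − y − m|² − φ(x)), and let Φ(x) = φ(x) + |x|²/2. Then the Legendre transform Φ*(y) = sup_{x ∈ ℝⁿ} (⟨x, y⟩ − Φ(x)) satisfies Φ*(y) = φ^c(y) + |y|²/2 for every y ∈ ℝⁿ. -/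
/-!
Polarization gives `⟨x, y⟩ - |x|²/2 = |y|²/2 - |x - y|²/2`, so `Φ*(y) - |y|²/2` is the
supremum of `-|x - y|²/2 - φ x`. Replacing `|x - y|²` by its infimum over the translates
`x - y - m` does not change this supremum: each translate is reached by moving `x` to `x - m`,
which leaves `φ` unchanged. Continuity and periodicity make `φ` bounded below, so all suprema
involved are finite.
-/

open Real

noncomputable section

/-- Squared Euclidean norm on `ℝⁿ`. -/
def sqnorm {n : ℕ} (v : Fin n → ℝ) : ℝ := ∑ i, (v i)^2

/-- Euclidean inner product on `ℝⁿ`. -/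
def euclInner {n : ℕ} (v w : Fin n → ℝ) : ℝ := ∑ i, v i * w i

/-- A lattice point of `ℤⁿ` viewed in `ℝⁿ`. -/
def zvec {n : ℕ} (m : Fin n → ℤ) : Fin n → ℝ := fun i => (m i : ℝ)

lemma sqnorm_nonneg {n : ℕ} (v : Fin n → ℝ) : 0 ≤ sqnorm v :=
  Finset.sum_nonneg fun _ _ => sq_nonneg _

lemma sqnorm_sub {n : ℕ} (x y : Fin n → ℝ) :
    sqnorm (x - y) = sqnorm x - 2 * euclInner x y + sqnorm y := by
  simp only [sqnorm, euclInner, Pi.sub_apply, sub_sq, Finset.sum_add_distrib,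
    Finset.sum_sub_distrib, Finset.mul_sum, mul_assoc]

lemma zvec_zero {n : ℕ} : zvec (0 : Fin n → ℤ) = 0 := by
  funext i
  simp [zvec]

lemma range_eq_image_Icc_of_periodic {n : ℕ} {β : Type*} (φ : (Fin n → ℝ) → β)
    (hper : ∀ x m, φ (x + zvec m) = φ x) :
    Set.range φ = φ '' Set.Icc 0 1 := by
  refine (Set.image_subset_range _ _).antisymm' ?_
  rintro _ ⟨x, rfl⟩
  refine ⟨x - zvec fun i => ⌊x i⌋, ⟨fun i => ?_, fun i => ?_⟩, ?_⟩
  · simp [zvec, Int.self_sub_floor, Int.fract_nonneg]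
  · simp [zvec, Int.self_sub_floor, (Int.fract_lt_one _).le]
  · rw [← hper _ fun i => ⌊x i⌋, sub_add_cancel]

lemma Continuous.bddBelow_range_of_periodic {n : ℕ} {φ : (Fin n → ℝ) → ℝ}
    (hφ : Continuous φ) (hper : ∀ x m, φ (x + zvec m) = φ x) :
    BddBelow (Set.range φ) := by
  rw [range_eq_image_Icc_of_periodic φ hper]
  exact isCompact_Icc.bddBelow_image hφ.continuousOn

lemma bddAbove_range_neg_sub {α : Type*} {c φ : α → ℝ} (hc : ∀ z, 0 ≤ c z)
    (hφ : BddBelow (Set.range φ)) :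
    BddAbove (Set.range fun x => -c x - φ x) := by
  obtain ⟨lo, hlo⟩ := hφ
  refine ⟨-lo, ?_⟩
  rintro _ ⟨x, rfl⟩
  linarith [hc x, hlo ⟨x, rfl⟩]

theorem ciSup_neg_iInf_translate_sub_eq {E ι : Type*} [AddCommGroup E] {c φ : E → ℝ}
    (v : ι → E) (hv : 0 ∈ Set.range v)
    (hc : ∀ z, 0 ≤ c z) (hφ : BddBelow (Set.range φ)) (hper : ∀ x i, φ (x + v i) = φ x)
    (y : E) :
    ⨆ x, (-(⨅ i, c (x - y - v i)) - φ x) = ⨆ x, (-c (x - y) - φ x) := by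
  obtain ⟨i₀, hi₀⟩ := hv
  have : Nonempty ι := ⟨i₀⟩
  have hinf_nonneg (x : E) : 0 ≤ ⨅ i, c (x - y - v i) := le_ciInf fun i => hc _
  have hinf_bdd (x : E) : BddBelow (Set.range fun i => c (x - y - v i)) :=
    ⟨0, by rintro _ ⟨i, rfl⟩; exact hc _⟩
  have hbdd := bddAbove_range_neg_sub (c := fun x => c (x - y)) (fun _ => hc _) hφ
  apply le_antisymm
  · refine ciSup_le fun x => ?_
    have hle : ∀ i, -(⨆ x, (-c (x - y) - φ x)) - φ x ≤ c (x - y - v i) := by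
      intro i
      have := le_ciSup hbdd (x - v i)
      rw [sub_right_comm, ← hper (x - v i) i, sub_add_cancel] at this
      linarith
    linarith [le_ciInf hle]
  · refine ciSup_le fun x => le_trans ?_ (le_ciSup (bddAbove_range_neg_sub hinf_nonneg hφ) x)
    have := ciInf_le (hinf_bdd x) i₀
    rw [hi₀, sub_zero] at this
    linarith

theorem statement5_general (n : ℕ) (φ : (Fin n → ℝ) → ℝ) (hφ : Continuous φ)
    (hper : ∀ (x : Fin n → ℝ) (m : Fin n → ℤ), φ (x + zvec m) = φ x) :
    ∀ y : Fin n → ℝ,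
      (⨆ x : Fin n → ℝ, (euclInner x y - (φ x + sqnorm x / 2))) =
        (⨆ x : Fin n → ℝ,
          (-(1 / 2) * (⨅ m : Fin n → ℤ, sqnorm (x - y - zvec m)) - φ x)) + sqnorm y / 2 := by
  intro y
  have hφb := hφ.bddBelow_range_of_periodic hper
  have hc : ∀ z : Fin n → ℝ, 0 ≤ sqnorm z / 2 := fun z => by linarith [sqnorm_nonneg z]
  have hbdd := bddAbove_range_neg_sub (c := fun x => sqnorm (x - y) / 2) (fun _ => hc _) hφb
  calc (⨆ x, (euclInner x y - (φ x + sqnorm x / 2)))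
      = ⨆ x, (-(sqnorm (x - y) / 2) - φ x + sqnorm y / 2) := by
        congr 1 with x
        linarith [sqnorm_sub x y]
    _ = (⨆ x, (-(sqnorm (x - y) / 2) - φ x)) + sqnorm y / 2 := (ciSup_add hbdd _).symm
    _ = (⨆ x, (-(⨅ m, sqnorm (x - y - zvec m) / 2) - φ x)) + sqnorm y / 2 := by
        rw [ciSup_neg_iInf_translate_sub_eq zvec ⟨0, zvec_zero⟩ hc hφb hper]
    _ = _ := by
        simp only [neg_mul, Real.mul_iInf_of_nonneg (by norm_num : (0 : ℝ) ≤ 1 / 2),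
          one_div_mul_eq_div]

/-- For a continuous `ℤⁿ`-periodic function `φ` on `ℝⁿ`, the Legendre
transform of `Φ(x) = φ(x) + |x|²/2` is `Φ*(y) = φ^c(y) + |y|²/2`, where `φ^c` is the
`c`-transform of `φ` for the cost `c(x,y) = (1/2) inf_{m ∈ ℤⁿ} |x - y - m|²`. -/
theorem statement5 (n : ℕ) (hn : 1 ≤ n) (φ : (Fin n → ℝ) → ℝ) (hφ : Continuous φ)
    (hper : ∀ (x : Fin n → ℝ) (m : Fin n → ℤ), φ (x + zvec m) = φ x) :
    ∀ y : Fin n → ℝ,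
      (⨆ x : Fin n → ℝ, (euclInner x y - (φ x + sqnorm x / 2))) =
        (⨆ x : Fin n → ℝ,
          (-(1 / 2) * (⨅ m : Fin n → ℤ, sqnorm (x - y - zvec m)) - φ x)) + sqnorm y / 2 :=
  statement5_general n φ hφ hper
end
end

section
/- Let n ≥ 1, X = ℝⁿ/ℤⁿ, k ≥ 1 an integer, N = kⁿ, and let H^{(N)}(x₁,…,x_N) = −(1/k) log perm(Ψ_{p_i}^{(N)}(x_j))_{i,j=1}^N. Then for all x, y ∈ X^N, |H^{(N)}(x)/N − H^{(N)}(y)/N| ≤ diam(X) · d^{(N)}(x, y), where d^{(N)}(x,y) = (1/N) min_σ Σ_i d(x_i, y_{σ(i)}) (minimum over permutations σ of {1,…,N}). In particular the family {H^{(N)}/N : k ∈ ℕ} is uniformly equicontinuous with respect to the matching metrics d^{(N)}. -/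
open MeasureTheory Filter Topology Real
open scoped ENNReal NNReal

noncomputable section

instance fact_zero_lt_one' : Fact ((0:ℝ) < 1) := ⟨one_pos⟩

/-- The `n`-dimensional torus `ℝⁿ/ℤⁿ`. -/
abbrev Torus (n : ℕ) : Type := Fin n → AddCircle (1 : ℝ)

/-- Section of the quotient map, with values in `[0,1)ⁿ`. -/
def torusSec {n : ℕ} (x : Torus n) : Fin n → ℝ := fun i => (AddCircle.equivIco 1 0 (x i) : ℝ)

/-- The quotient metric `d(πx, πy) = inf_{m ∈ ℤⁿ} |x - y - m|` on the torus. -/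
def tdist {n : ℕ} (x y : Torus n) : ℝ :=
  ⨅ m : Fin n → ℤ, Real.sqrt (sqnorm (torusSec x - torusSec y - zvec m))

/-- The diameter of the torus for the quotient metric. -/
def torusDiam (n : ℕ) : ℝ := ⨆ x : Torus n, ⨆ y : Torus n, tdist x y

/-- The permanent of a matrix `A`, `perm A = ∑_σ ∏_i A i (σ i)`. -/
def perm {ι : Type*} [Fintype ι] [DecidableEq ι] (A : ι → ι → ℝ) : ℝ :=
  ∑ σ : Equiv.Perm ι, ∏ i, A i (σ i)

/-- The wave function `Ψ_p^{(N)}` lifted to `ℝⁿ`. -/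
def wave {n : ℕ} (k : ℕ) (p : Fin n → ℝ) (x : Fin n → ℝ) : ℝ :=
  ∑' m : Fin n → ℤ, Real.exp (-(k : ℝ) * sqnorm (x - p - zvec m) / 2)

/-- The lattice point of `(1/k)ℤⁿ/ℤⁿ` indexed by `p : Fin n → Fin k`. -/
def latticePt {n : ℕ} (k : ℕ) (p : Fin n → Fin k) : Fin n → ℝ := fun i => (p i : ℝ) / k

/-- The Hamiltonian `H^{(N)}(x) = -(1/k) log perm(Ψ_{p_i}^{(N)}(x_j))`, `N = kⁿ`. -/
def Ham (n k : ℕ) (x : (Fin n → Fin k) → Torus n) : ℝ :=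
  -(1 / (k : ℝ)) * Real.log (perm fun p q => wave k (latticePt k p) (torusSec (x q)))

/-- The matching distance `d^{(N)}(x,y) = (1/N) inf_σ Σ_i d(x_i, y_{σ(i)})` on `X^N`. -/
def matchDistT {n : ℕ} {ι : Type*} [Fintype ι] (x y : ι → Torus n) : ℝ :=
  (Fintype.card ι : ℝ)⁻¹ * ⨅ σ : Equiv.Perm ι, ∑ i, tdist (x i) (y (σ i))

/-!
The wave function factorises as `Ψ_p(x) = ∏ᵢ θ(xᵢ - pᵢ)` with `θ(c) = ∑_{m ∈ ℤ} e^{-k(c-m)²/2}`.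
The logarithmic derivative `θ'/θ` is `-k` times the mean of `c - m` under the Gaussian weights, and
pairing `m` with its reflection about the largest half-integer below `c` shows that this mean lies
in `[-1/2, 1/2]`. Hence `log θ` is `k/2`-Lipschitz and `1`-periodic, so `log Ψ_p` is Lipschitz with
constant `k √n / 2 = k · diam X` for the torus metric. After permuting the columns of the second
matrix by an optimal matching `σ`, every term of the permanent changes by a factor of at most
`exp (k · diam X · ∑ᵢ d(xᵢ, y_{σ i}))`, which bounds the difference of the logarithms.
-/

def periodicGaussian (κ c : ℝ) : ℝ := ∑' m : ℤ, exp (-κ * (c - m) ^ 2 / 2)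

def periodicGaussianMoment (κ c : ℝ) : ℝ := ∑' m : ℤ, (c - m) * exp (-κ * (c - m) ^ 2 / 2)

lemma sq_sub_two_mul_abs_le_sq_add (u w : ℝ) : u ^ 2 - 2 * (|u| * |w|) ≤ (u + w) ^ 2 := by
  nlinarith [neg_abs_le (u * w), abs_mul u w, sq_nonneg w]

section GaussianSeries

variable {κ : ℝ}

lemma summable_abs_add_mul_exp_gaussian (hκ : 0 < κ) (c b β : ℝ) :
    Summable fun m : ℤ => (|c - m| + b) * exp (-κ * (c - m) ^ 2 / 2 + β * |c - m|) := by
  have hB : ∀ j, Summable fun m : ℤ =>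
      |(m : ℝ)| ^ j * exp (-(κ / 2) * m ^ 2 + (κ * |c| + |β|) * |(m : ℝ)|) := fun j =>
    (summable_pow_mul_jacobiTheta₂_term_bound ((κ * |c| + |β|) / (2 * π))
      (T := κ / (2 * π)) (by positivity) j).congr fun m => by
        push_cast
        congr 2
        field_simp
        ring
  refine Summable.of_norm_bounded
    ((((hB 1).add ((hB 0).mul_left (|c| + |b|))).mul_left (exp (|β| * |c|)))) fun m => ?_
  have hexp : exp (-κ * (c - m) ^ 2 / 2 + β * |c - m|) ≤
      exp (|β| * |c|) * exp (-(κ / 2) * m ^ 2 + (κ * |c| + |β|) * |(m : ℝ)|) := by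
    rw [← exp_add]
    refine exp_le_exp.2 ?_
    have hsq := sq_sub_two_mul_abs_le_sq_add (-(m : ℝ)) c
    have hβ : β * |c - m| ≤ |β| * (|c| + |(m : ℝ)|) :=
      (mul_le_mul_of_nonneg_right (le_abs_self β) (abs_nonneg _)).trans
        (mul_le_mul_of_nonneg_left (abs_sub c (m : ℝ)) (abs_nonneg β))
    rw [abs_neg, neg_sq] at hsq
    nlinarith [abs_nonneg (m : ℝ), abs_nonneg c]
  rw [norm_mul, norm_of_nonneg (exp_pos _).le, Real.norm_eq_abs]
  calc |(|c - m| + b)| * exp (-κ * (c - m) ^ 2 / 2 + β * |c - m|)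
      ≤ (|(m : ℝ)| + (|c| + |b|)) *
          (exp (|β| * |c|) * exp (-(κ / 2) * m ^ 2 + (κ * |c| + |β|) * |(m : ℝ)|)) := by
        gcongr
        calc |(|c - m| + b)| ≤ |c - m| + |b| := (abs_add_le _ _).trans_eq (by rw [abs_abs])
          _ ≤ _ := by linarith [abs_sub c (m : ℝ)]
    _ = _ := by ring

lemma summable_gaussian (hκ : 0 < κ) (c : ℝ) :
    Summable fun m : ℤ => exp (-κ * (c - m) ^ 2 / 2) :=
  (summable_abs_add_mul_exp_gaussian hκ c 1 0).of_nonneg_of_le (fun _ => (exp_pos _).le)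
    fun m => by
      simpa using le_mul_of_one_le_left (exp_pos _).le (by linarith [abs_nonneg (c - m)])

lemma summable_sub_mul_gaussian (hκ : 0 < κ) (c s : ℝ) :
    Summable fun m : ℤ => (c - m - s) * exp (-κ * (c - m) ^ 2 / 2) :=
  (summable_abs_add_mul_exp_gaussian hκ c |s| 0).of_norm_bounded fun m => by
    rw [norm_mul, norm_of_nonneg (exp_pos _).le, zero_mul, add_zero]
    exact mul_le_mul_of_nonneg_right (abs_sub _ _) (exp_pos _).le

lemma periodicGaussian_pos (hκ : 0 < κ) (c : ℝ) : 0 < periodicGaussian κ c :=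
  (summable_gaussian hκ c).tsum_pos (fun _ => (exp_pos _).le) 0 (exp_pos _)

lemma hasDerivAt_periodicGaussian (hκ : 0 < κ) (c : ℝ) :
    HasDerivAt (periodicGaussian κ) (-κ * periodicGaussianMoment κ c) c := by
  have hterm : ∀ (m : ℤ) (y : ℝ), y ∈ Metric.ball c 1 →
      HasDerivAt (fun z => exp (-κ * (z - m) ^ 2 / 2))
        (exp (-κ * (y - m) ^ 2 / 2) * (-κ * (y - m))) y := fun m y _ => by
    simpa [mul_comm, mul_left_comm, mul_assoc, div_eq_mul_inv] using
      ((((hasDerivAt_id y).sub_const (m : ℝ)).pow 2).const_mul (-κ / 2)).exp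
  have hbound : ∀ (m : ℤ) (y : ℝ), y ∈ Metric.ball c 1 →
      ‖exp (-κ * (y - m) ^ 2 / 2) * (-κ * (y - m))‖ ≤
        κ * ((|c - m| + 1) * exp (-κ * (c - m) ^ 2 / 2 + κ * |c - m|)) := by
    intro m y hy
    have hyc : |y - c| ≤ 1 := (Real.dist_eq y c ▸ Metric.mem_ball.1 hy).le
    have hsq := sq_sub_two_mul_abs_le_sq_add (c - m) (y - c)
    rw [show c - m + (y - c) = y - m by ring] at hsq
    have habs : |y - m| ≤ |c - m| + 1 := by
      have := abs_add_le (c - m) (y - c)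
      rw [show c - m + (y - c) = y - m by ring] at this
      linarith
    rw [norm_mul, norm_mul, norm_neg, Real.norm_eq_abs, Real.norm_eq_abs, Real.norm_eq_abs,
      abs_of_pos (exp_pos _), abs_of_pos hκ, mul_left_comm]
    refine mul_le_mul_of_nonneg_left ?_ hκ.le
    rw [mul_comm]
    refine mul_le_mul habs (exp_le_exp.2 ?_) (exp_pos _).le (by positivity)
    nlinarith [mul_le_mul_of_nonneg_left hyc (abs_nonneg (c - m))]
  have hder := hasDerivAt_tsum_of_isPreconnected
    ((summable_abs_add_mul_exp_gaussian hκ c 1 κ).mul_left κ) Metric.isOpen_ball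
    (convex_ball c 1).isPreconnected hterm hbound (Metric.mem_ball_self one_pos)
    (summable_gaussian hκ c) (Metric.mem_ball_self one_pos)
  have hsum : ∑' m : ℤ, exp (-κ * (c - m) ^ 2 / 2) * (-κ * (c - m)) =
      -κ * periodicGaussianMoment κ c := by
    rw [periodicGaussianMoment, ← tsum_mul_left]
    exact tsum_congr fun m => by ring
  exact hsum ▸ hder

lemma periodicGaussian_neg (c : ℝ) : periodicGaussian κ (-c) = periodicGaussian κ c := by
  rw [periodicGaussian, ← (Equiv.neg ℤ).tsum_eq]
  exact tsum_congr fun m => by simp only [Equiv.neg_apply, Int.cast_neg]; ring_nf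

lemma periodicGaussianMoment_neg (c : ℝ) :
    periodicGaussianMoment κ (-c) = -periodicGaussianMoment κ c := by
  rw [periodicGaussianMoment, ← (Equiv.neg ℤ).tsum_eq, periodicGaussianMoment, ← tsum_neg]
  exact tsum_congr fun m => by simp only [Equiv.neg_apply, Int.cast_neg]; ring_nf

lemma periodicGaussian_add_int (c : ℝ) (j : ℤ) :
    periodicGaussian κ (c + j) = periodicGaussian κ c := by
  rw [periodicGaussian, ← (Equiv.addRight j).tsum_eq]
  exact tsum_congr fun m => by simp only [Equiv.coe_addRight, Int.cast_add]; ring_nf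

lemma periodicGaussianMoment_le (hκ : 0 < κ) {c : ℝ} (a : ℤ) (ha : (a : ℝ) / 2 ≤ c) :
    periodicGaussianMoment κ c ≤ (c - a / 2) * periodicGaussian κ c := by
  set s := c - a / 2 with hs_def
  have hs : 0 ≤ s := sub_nonneg.2 ha
  set f : ℤ → ℝ := fun m => (c - m - s) * exp (-κ * (c - m) ^ 2 / 2)
  have hf : Summable f := summable_sub_mul_gaussian hκ c s
  have hodd : ∀ u : ℝ, u * (exp (-κ * (s + u) ^ 2 / 2) - exp (-κ * (s - u) ^ 2 / 2)) ≤ 0 := by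
    intro u
    rcases le_total 0 u with hu | hu
    · exact mul_nonpos_of_nonneg_of_nonpos hu (sub_nonpos.2 (exp_le_exp.2
        (by nlinarith [mul_nonneg (mul_nonneg hκ.le hs) hu])))
    · exact mul_nonpos_of_nonpos_of_nonneg hu (sub_nonneg.2 (exp_le_exp.2
        (by nlinarith [mul_nonneg (mul_nonneg hκ.le hs) (neg_nonneg.2 hu)])))
  -- `m ↦ a - m` sends `c - m = s + u` to `s - u`, which carries the larger weight when `u ≥ 0`
  have hpair : ∀ m, f m + f (a - m) ≤ 0 := fun m =>
    calc f m + f (a - m) = (c - m - s) *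
          (exp (-κ * (s + (c - m - s)) ^ 2 / 2) - exp (-κ * (s - (c - m - s)) ^ 2 / 2)) := by
          simp only [f, hs_def]; push_cast; ring_nf
      _ ≤ 0 := hodd _
  have htwice : ∑' m, f m + ∑' m, f m ≤ 0 := by
    nth_rewrite 2 [← (Equiv.subLeft a).tsum_eq f]
    have hreflect : Summable fun m => f (Equiv.subLeft a m) :=
      (Equiv.subLeft a).summable_iff.2 hf
    rw [← hf.tsum_add hreflect]
    exact tsum_nonpos hpair
  have hsplit : periodicGaussianMoment κ c = s * periodicGaussian κ c + ∑' m, f m := by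
    rw [periodicGaussianMoment, periodicGaussian, ← tsum_mul_left,
      ← ((summable_gaussian hκ c).mul_left s).tsum_add hf]
    exact tsum_congr fun m => by ring
  linarith

lemma abs_periodicGaussianMoment_le (hκ : 0 < κ) (c : ℝ) :
    |periodicGaussianMoment κ c| ≤ periodicGaussian κ c / 2 := by
  have hupper : ∀ d, periodicGaussianMoment κ d ≤ periodicGaussian κ d / 2 := fun d =>
    calc periodicGaussianMoment κ d ≤ (d - ⌊2 * d⌋ / 2) * periodicGaussian κ d :=
          periodicGaussianMoment_le hκ _ (by linarith [Int.floor_le (2 * d)])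
      _ ≤ periodicGaussian κ d / 2 := by
          nlinarith [Int.lt_floor_add_one (2 * d), periodicGaussian_pos hκ d]
  have hlower := hupper (-c)
  rw [periodicGaussianMoment_neg, periodicGaussian_neg] at hlower
  exact abs_le.2 ⟨by linarith, hupper c⟩

lemma periodicGaussian_le_exp_mul (hκ : 0 < κ) (c₁ c₂ : ℝ) :
    periodicGaussian κ c₁ ≤ exp (κ / 2 * |c₁ - c₂|) * periodicGaussian κ c₂ := by
  have hpos := periodicGaussian_pos hκ
  have hlip : |log (periodicGaussian κ c₁) - log (periodicGaussian κ c₂)| ≤ κ / 2 * |c₁ - c₂| :=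
    convex_univ.norm_image_sub_le_of_norm_hasDerivWithin_le
      (fun d _ => ((hasDerivAt_periodicGaussian hκ d).log (hpos d).ne').hasDerivWithinAt)
      (fun d _ => by
        rw [Real.norm_eq_abs, abs_div, abs_mul, abs_neg, abs_of_pos hκ, abs_of_pos (hpos d),
          div_le_iff₀ (hpos d)]
        nlinarith [abs_periodicGaussianMoment_le hκ d])
      (Set.mem_univ c₂) (Set.mem_univ c₁)
  rw [← exp_log (hpos c₁), ← exp_log (hpos c₂), ← exp_add]
  exact exp_le_exp.2 (by linarith [le_abs_self (log (periodicGaussian κ c₁) -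
    log (periodicGaussian κ c₂))])

lemma periodicGaussian_le_exp_mul_norm (hκ : 0 < κ) (c₁ c₂ : ℝ) :
    periodicGaussian κ c₁ ≤
      exp (κ / 2 * ‖((c₁ - c₂ : ℝ) : UnitAddCircle)‖) * periodicGaussian κ c₂ := by
  rw [UnitAddCircle.norm_eq]
  have hc₁ : c₁ = c₂ + (c₁ - c₂ - round (c₁ - c₂)) + round (c₁ - c₂) := by ring
  rw [hc₁, periodicGaussian_add_int, ← hc₁]
  simpa using periodicGaussian_le_exp_mul hκ (c₂ + (c₁ - c₂ - round (c₁ - c₂))) c₂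

end GaussianSeries

lemma hasSum_pi_prod {β : Type*} :
    ∀ {n : ℕ} (f : Fin n → β → ℝ), (∀ i b, 0 ≤ f i b) → (∀ i, Summable (f i)) →
      HasSum (fun m : Fin n → β => ∏ i, f i (m i)) (∏ i, ∑' b, f i b)
  | 0, f, _, _ => by simp
  | n + 1, f, hf0, hf => by
    have htail := hasSum_pi_prod (fun i => f (Fin.succ i)) (fun i => hf0 i.succ) fun i => hf i.succ
    have hhead := Summable.mul_of_nonneg (hf 0) htail.summable (fun b => hf0 0 b)
      fun m => Finset.prod_nonneg fun i _ => hf0 i.succ (m i)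
    rw [Fin.prod_univ_succ, ← (Fin.consEquiv fun _ => β).hasSum_iff]
    exact ((hf 0).hasSum.mul htail hhead).congr_fun fun q => Fin.prod_univ_succ _

lemma wave_eq_prod {n k : ℕ} (hk : 0 < k) (p x : Fin n → ℝ) :
    wave k p x = ∏ i, periodicGaussian k (x i - p i) := by
  have hκ : (0 : ℝ) < k := Nat.cast_pos.2 hk
  refine (tsum_congr fun m => ?_).trans (hasSum_pi_prod (fun i (m : ℤ) =>
    exp (-k * (x i - p i - m) ^ 2 / 2)) (fun _ _ => (exp_pos _).le)
      fun i => summable_gaussian hκ _).tsum_eq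
  rw [← exp_sum, sqnorm, Finset.mul_sum, Finset.sum_div]
  simp [zvec]

lemma wave_pos {n k : ℕ} (hk : 0 < k) (p x : Fin n → ℝ) : 0 < wave k p x := by
  rw [wave_eq_prod hk]
  exact Finset.prod_pos fun i _ => periodicGaussian_pos (Nat.cast_pos.2 hk) _

lemma wave_le_exp_mul {n k : ℕ} (hk : 0 < k) (p x x' : Fin n → ℝ) :
    wave k p x ≤
      exp (k / 2 * ∑ i, ‖((x i - x' i : ℝ) : UnitAddCircle)‖) * wave k p x' := by
  have hκ : (0 : ℝ) < k := Nat.cast_pos.2 hk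
  rw [wave_eq_prod hk, wave_eq_prod hk, Finset.mul_sum, exp_sum, ← Finset.prod_mul_distrib]
  refine Finset.prod_le_prod (fun i _ => (periodicGaussian_pos hκ _).le) fun i _ => ?_
  simpa using periodicGaussian_le_exp_mul_norm hκ (x i - p i) (x' i - p i)

section TorusMetric
variable {n : ℕ}

lemma coe_torusSec (x : Torus n) (i : Fin n) : ((torusSec x i : ℝ) : UnitAddCircle) = x i :=
  (AddCircle.equivIco 1 0).symm_apply_apply (x i)

lemma norm_coe_le_abs_sub_intCast (t : ℝ) (m : ℤ) : ‖(t : UnitAddCircle)‖ ≤ |t - m| := by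
  have : ((t - m : ℝ) : UnitAddCircle) = t := by
    rw [AddCircle.coe_sub, sub_eq_self]
    exact (AddCircle.coe_eq_zero_iff 1).2 ⟨m, by simp⟩
  exact this ▸ QuotientAddGroup.norm_mk_le_norm

lemma tdist_eq_sqrt_sum_norm_sq (x y : Torus n) : tdist x y = √(∑ i, ‖x i - y i‖ ^ 2) := by
  have hnorm : ∀ i, ‖x i - y i‖ = ‖((torusSec x i - torusSec y i : ℝ) : UnitAddCircle)‖ := by
    intro i; rw [AddCircle.coe_sub, coe_torusSec, coe_torusSec]
  apply le_antisymm
  · refine (ciInf_le ⟨0, ?_⟩ fun i => round (torusSec x i - torusSec y i)).trans_eq ?_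
    · rintro _ ⟨m, rfl⟩; exact sqrt_nonneg _
    · congr 1
      refine Finset.sum_congr rfl fun i _ => ?_
      rw [hnorm, UnitAddCircle.norm_eq, sq_abs]
      rfl
  · refine le_ciInf fun m => sqrt_le_sqrt (Finset.sum_le_sum fun i _ => ?_)
    rw [hnorm]
    exact pow_le_pow_left₀ (norm_nonneg _) (norm_coe_le_abs_sub_intCast _ (m i)) 2 |>.trans
      (sq_abs _).le

lemma tdist_comm (x y : Torus n) : tdist x y = tdist y x := by
  simp only [tdist_eq_sqrt_sum_norm_sq, norm_sub_rev]

lemma tdist_le_sqrt_div_two (x y : Torus n) : tdist x y ≤ √n / 2 := by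
  have hhalf : ∀ i, ‖x i - y i‖ ^ 2 ≤ (1 / 2) ^ 2 := fun i =>
    pow_le_pow_left₀ (norm_nonneg _) ((AddCircle.norm_le_half_period _ one_ne_zero).trans_eq
      (by norm_num)) 2
  rw [tdist_eq_sqrt_sum_norm_sq, show √n / 2 = √(n * (1 / 2) ^ 2) by
    rw [sqrt_mul (Nat.cast_nonneg n), sqrt_sq (by norm_num)]; ring]
  exact sqrt_le_sqrt ((Finset.sum_le_sum fun i _ => hhalf i).trans_eq (by simp))

lemma tdist_zero_half : tdist (0 : Torus n) (fun _ => ((1 / 2 : ℝ) : UnitAddCircle)) = √n / 2 := by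
  have hhalf : ‖((1 / 2 : ℝ) : UnitAddCircle)‖ = 1 / 2 := by
    simpa using AddCircle.norm_half_period_eq (1 : ℝ)
  rw [tdist_eq_sqrt_sum_norm_sq]
  simp only [Pi.zero_apply, zero_sub, norm_neg, hhalf, Finset.sum_const, Finset.card_univ,
    Fintype.card_fin, nsmul_eq_mul]
  rw [sqrt_mul (Nat.cast_nonneg n), sqrt_sq (by norm_num)]
  ring

lemma torusDiam_eq (n : ℕ) : torusDiam n = √n / 2 := by
  have hbdd : ∀ x : Torus n, BddAbove (Set.range (tdist x)) := fun x =>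
    ⟨√n / 2, by rintro _ ⟨y, rfl⟩; exact tdist_le_sqrt_div_two x y⟩
  refine le_antisymm (ciSup_le fun x => ciSup_le fun y => tdist_le_sqrt_div_two x y) ?_
  calc √n / 2 = tdist 0 (fun _ => ((1 / 2 : ℝ) : UnitAddCircle)) := tdist_zero_half.symm
    _ ≤ ⨆ y, tdist 0 y := le_ciSup (hbdd 0) _
    _ ≤ torusDiam n := le_ciSup (f := fun x : Torus n => ⨆ y, tdist x y)
        ⟨√n / 2, by rintro _ ⟨x, rfl⟩; exact ciSup_le (tdist_le_sqrt_div_two x)⟩ 0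

lemma sum_norm_sub_le_sqrt_mul_tdist (x y : Torus n) :
    ∑ i, ‖x i - y i‖ ≤ √n * tdist x y := by
  rw [tdist_eq_sqrt_sum_norm_sq, ← sqrt_mul (Nat.cast_nonneg n)]
  refine le_sqrt_of_sq_le ?_
  simpa using sq_sum_le_card_mul_sum_sq (s := Finset.univ) (f := fun i => ‖x i - y i‖)

end TorusMetric

lemma wave_torusSec_le {n k : ℕ} (hk : 0 < k) (p : Fin n → ℝ) (a b : Torus n) :
    wave k p (torusSec a) ≤ exp (k * torusDiam n * tdist a b) * wave k p (torusSec b) := by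
  refine (wave_le_exp_mul hk p _ _).trans
    (mul_le_mul_of_nonneg_right (exp_le_exp.2 ?_) (wave_pos hk _ _).le)
  simp only [AddCircle.coe_sub, coe_torusSec]
  calc k / 2 * ∑ i, ‖a i - b i‖ ≤ k / 2 * (√n * tdist a b) := by
        gcongr; exact sum_norm_sub_le_sqrt_mul_tdist a b
    _ = k * torusDiam n * tdist a b := by rw [torusDiam_eq]; ring

section Permanent
variable {ι : Type*} [Fintype ι] [DecidableEq ι]

lemma perm_pos {A : ι → ι → ℝ} (hA : ∀ i j, 0 < A i j) : 0 < perm A :=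
  Finset.sum_pos (fun _ _ => Finset.prod_pos fun _ _ => hA _ _) Finset.univ_nonempty

lemma perm_comp_right (A : ι → ι → ℝ) (σ : Equiv.Perm ι) :
    perm (fun i j => A i (σ j)) = perm A :=
  Fintype.sum_equiv (Equiv.mulLeft σ) _ _ fun _ => rfl

lemma perm_le_exp_sum_mul {A B : ι → ι → ℝ} (w : ι → ℝ) (hA : ∀ i j, 0 ≤ A i j)
    (hAB : ∀ i j, A i j ≤ exp (w j) * B i j) : perm A ≤ exp (∑ j, w j) * perm B := by
  rw [perm, perm, Finset.mul_sum]
  refine Finset.sum_le_sum fun σ _ => ?_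
  calc ∏ i, A i (σ i) ≤ ∏ i, (exp (w (σ i)) * B i (σ i)) :=
        Finset.prod_le_prod (fun _ _ => hA _ _) fun _ _ => hAB _ _
    _ = exp (∑ j, w j) * ∏ i, B i (σ i) := by
        rw [Finset.prod_mul_distrib, ← exp_sum, Equiv.sum_comp σ w]

lemma abs_log_perm_sub_le {A B : ι → ι → ℝ} (w : ι → ℝ) (hA : ∀ i j, 0 < A i j)
    (hB : ∀ i j, 0 < B i j) (hAB : ∀ i j, A i j ≤ exp (w j) * B i j)
    (hBA : ∀ i j, B i j ≤ exp (w j) * A i j) :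
    |log (perm A) - log (perm B)| ≤ ∑ j, w j := by
  have hlog : ∀ {C D : ι → ι → ℝ}, (∀ i j, 0 < C i j) → (∀ i j, 0 < D i j) →
      (∀ i j, C i j ≤ exp (w j) * D i j) → log (perm C) ≤ ∑ j, w j + log (perm D) :=
    fun hC hD hCD => (log_le_iff_le_exp (perm_pos hC)).2 <| by
      rw [exp_add, exp_log (perm_pos hD)]
      exact perm_le_exp_sum_mul w (fun i j => (hC i j).le) hCD
  rw [abs_sub_le_iff]
  constructor <;> linarith [hlog hA hB hAB, hlog hB hA hBA]

end Permanent

theorem statement10_general (n k : ℕ) (hk : 1 ≤ k)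
    (x y : (Fin n → Fin k) → Torus n) :
    |Ham n k x / ((k ^ n : ℕ) : ℝ) - Ham n k y / ((k ^ n : ℕ) : ℝ)| ≤
      torusDiam n * matchDistT x y := by
  obtain ⟨σ, hσ⟩ := exists_eq_ciInf_of_finite
    (f := fun σ : Equiv.Perm (Fin n → Fin k) => ∑ i, tdist (x i) (y (σ i)))
  have hlog := abs_log_perm_sub_le (fun q => k * torusDiam n * tdist (x q) (y (σ q)))
    (A := fun p q => wave k (latticePt k p) (torusSec (x q)))
    (B := fun p q => wave k (latticePt k p) (torusSec (y (σ q))))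
    (fun _ _ => wave_pos hk _ _) (fun _ _ => wave_pos hk _ _)
    (fun _ _ => wave_torusSec_le hk _ _ _)
    (fun _ q => tdist_comm (x q) (y (σ q)) ▸ wave_torusSec_le hk _ _ _)
  rw [perm_comp_right (fun p q => wave k (latticePt k p) (torusSec (y q))) σ,
    ← Finset.mul_sum] at hlog
  have hκ : (0 : ℝ) < k := Nat.cast_pos.2 hk
  have hN : (0 : ℝ) < ((k ^ n : ℕ) : ℝ) := Nat.cast_pos.2 (pow_pos hk n)
  rw [Ham, Ham, matchDistT, ← hσ, Fintype.card_fun, Fintype.card_fin, Fintype.card_fin]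
  generalize log (perm fun p q => wave k (latticePt k p) (torusSec (x q))) = Lx at hlog ⊢
  generalize log (perm fun p q => wave k (latticePt k p) (torusSec (y q))) = Ly at hlog ⊢
  rw [show -(1 / k) * Lx / ((k ^ n : ℕ) : ℝ) - -(1 / k) * Ly / ((k ^ n : ℕ) : ℝ) =
      -(Lx - Ly) / (k * (k ^ n : ℕ)) by field_simp; ring,
    abs_div, abs_neg, abs_of_pos (mul_pos hκ hN), div_le_iff₀ (mul_pos hκ hN)]
  exact hlog.trans_eq (by field_simp)

/-- The normalized Hamiltonians `H^{(N)}/N` are uniformly Lipschitz (with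
constant `diam X`) for the matching metrics; in particular they are equicontinuous. -/
theorem statement10 (n k : ℕ) (hn : 1 ≤ n) (hk : 1 ≤ k)
    (x y : (Fin n → Fin k) → Torus n) :
    |Ham n k x / ((k ^ n : ℕ) : ℝ) - Ham n k y / ((k ^ n : ℕ) : ℝ)| ≤
      torusDiam n * matchDistT x y :=
  statement10_general n k hk x y
end
end

section
/- Let (E, μ) be a σ-finite measure space, N ≥ 1, and let f₁, …, f_N : E → ℂ be square integrable with respect to μ. Then det(∫_E f_j · conj(f_k) dμ)_{j,k=1}^N = (1/N!) ∫_{E^N} |det(f_k(x_j))_{j,k=1}^N|² dμ^{⊗N}(x₁,…,x_N). -/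
/-!
Expanding both determinants by the Leibniz formula writes `|det (f_k(x_j))|²` as a double sum
over permutations `σ, τ` of products `∏_j f_{σ j}(x_j) · conj f_{τ j}(x_j)`, each of which
integrates, by Fubini, to `∏_j G_{σ j, τ j}` for the Gram matrix `G`. For fixed `σ` the sum over
`τ` is the Leibniz expansion of `G` with rows permuted by `σ`, namely `sign σ · det G`, so each of
the `N!` values of `σ` contributes `det G`.
-/

open MeasureTheory Finset Equiv Matrix
open scoped ComplexConjugate

namespace Matrix

variable {n R : Type*} [Fintype n] [DecidableEq n] [CommRing R]

theorem sum_perm_sign_mul_prod_apply_perm (g : Matrix n n R) (σ : Perm n) :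
    ∑ τ : Perm n, ((Perm.sign τ : ℤ) : R) * ∏ j, g (σ j) (τ j) =
      Perm.sign σ * g.det := by
  rw [← det_permute, ← det_transpose, det_apply']
  rfl

theorem sum_perm_sum_perm_sign_mul_prod (g : Matrix n n R) :
    ∑ σ : Perm n, ∑ τ : Perm n,
        ((Perm.sign σ : ℤ) : R) * (Perm.sign τ : ℤ) * ∏ j, g (σ j) (τ j) =
      (Fintype.card n).factorial * g.det := by
  simp_rw [mul_assoc, ← mul_sum, sum_perm_sign_mul_prod_apply_perm, ← mul_assoc, ← Int.cast_mul,
    ← Units.val_mul, Int.units_mul_self, Units.val_one, Int.cast_one, one_mul, sum_const,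
    card_univ, Fintype.card_perm, nsmul_eq_mul]

theorem det_mul_conj_det [StarRing R] (A : Matrix n n R) :
    A.det * conj A.det = ∑ σ : Perm n, ∑ τ : Perm n,
      ((Perm.sign σ : ℤ) : R) * (Perm.sign τ : ℤ) * ∏ j, A j (σ j) * conj (A j (τ j)) := by
  rw [← det_transpose, det_apply', map_sum, sum_mul_sum]
  refine sum_congr rfl fun σ _ => sum_congr rfl fun τ _ => ?_
  simp only [map_mul, map_prod, map_intCast, transpose_apply, prod_mul_distrib]
  ring

end Matrix

theorem integral_norm_det_sq_eq_factorial_mul_det_gram {ι E 𝕜 : Type*} [Fintype ι]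
    [DecidableEq ι] [RCLike 𝕜] [MeasurableSpace E] (μ : Measure E) [SigmaFinite μ]
    (f : ι → E → 𝕜) (hf : ∀ i, MemLp (f i) 2 μ) :
    ((∫ x : ι → E, ‖det (of fun j k => f k (x j))‖ ^ 2 ∂Measure.pi fun _ => μ : ℝ) : 𝕜) =
      (Fintype.card ι).factorial * det (of fun j k => ∫ t, f j t * conj (f k t) ∂μ) := by
  have hgram : ∀ j k, Integrable (fun t => f j t * conj (f k t)) μ :=
    fun j k => (hf j).integrable_mul (hf k).star
  have hterm : ∀ σ τ : Perm ι, Integrable (fun x : ι → E =>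
      ∏ j, f (σ j) (x j) * conj (f (τ j) (x j))) (Measure.pi fun _ => μ) :=
    fun σ τ => Integrable.fintype_prod fun j => hgram (σ j) (τ j)
  rw [← integral_ofReal]
  simp_rw [RCLike.ofReal_pow, ← RCLike.mul_conj, det_mul_conj_det, of_apply]
  rw [← sum_perm_sum_perm_sign_mul_prod, integral_finsetSum _ fun σ _ =>
    integrable_finsetSum _ fun τ _ => (hterm σ τ).const_mul _]
  refine sum_congr rfl fun σ _ => ?_
  rw [integral_finsetSum _ fun τ _ => (hterm σ τ).const_mul _]
  refine sum_congr rfl fun τ _ => ?_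
  rw [integral_const_mul, integral_fintype_prod_eq_prod
    (fun j t => f (σ j) t * conj (f (τ j) t))]
  rfl

theorem statement14_general {E : Type*} [MeasurableSpace E] (μ : Measure E) [SigmaFinite μ]
    (N : ℕ) (f : Fin N → E → ℂ)
    (hL2 : ∀ j, MemLp (f j) 2 μ) :
    Matrix.det (Matrix.of fun j k => ∫ t, f j t * (starRingEnd ℂ) (f k t) ∂μ) =
      (N.factorial : ℂ)⁻¹ *
        ((∫ x : Fin N → E, ‖Matrix.det (Matrix.of fun j k => f k (x j))‖ ^ 2
          ∂(Measure.pi fun _ : Fin N => μ) : ℝ) : ℂ) := by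
  rw [← RCLike.ofReal_eq_complex_ofReal, integral_norm_det_sq_eq_factorial_mul_det_gram μ f hL2,
    Fintype.card_fin, inv_mul_cancel_left₀ (Nat.cast_ne_zero.2 N.factorial_ne_zero)]

/-- Gram determinant formula: for `f₁, …, f_N ∈ L²(μ)`,
`det(∫ f_j conj(f_k) dμ) = (1/N!) ∫_{E^N} |det(f_k(x_j))|² dμ^{⊗N}`. -/
theorem statement14 {E : Type*} [MeasurableSpace E] (μ : Measure E) [SigmaFinite μ]
    (N : ℕ) (hN : 1 ≤ N) (f : Fin N → E → ℂ)
    (hmeas : ∀ j, Measurable (f j)) (hL2 : ∀ j, MemLp (f j) 2 μ) :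
    Matrix.det (Matrix.of fun j k => ∫ t, f j t * (starRingEnd ℂ) (f k t) ∂μ) =
      (N.factorial : ℂ)⁻¹ *
        ((∫ x : Fin N → E, ‖Matrix.det (Matrix.of fun j k => f k (x j))‖ ^ 2
          ∂(Measure.pi fun _ : Fin N => μ) : ℝ) : ℂ) :=
  statement14_general μ N f hL2
end

section
/- Let X be a measurable space, μ₀ and μ Borel probability measures on X, and φ : X → ℝ a bounded measurable function. Then log ∫_X e^{φ} dμ₀ + Ent_{μ₀}(μ) ≥ ∫_X φ dμ, with equality if and only if μ = e^{φ} μ₀ / ∫_X e^{φ} dμ₀ (i.e. μ is absolutely continuous with respect to μ₀ with density e^{φ}/∫_X e^{φ} dμ₀). -/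
/-!
With `ν = e^φ μ₀ / ∫ e^φ dμ₀` the tilted measure, `log (dμ/dν) = log (dμ/dμ₀) - φ + log ∫ e^φ dμ₀`,
so integrating against `μ` gives the identity
`log ∫ e^φ dμ₀ + Ent_{μ₀}(μ) = ∫ φ dμ + KL(μ ‖ ν)`, valid in `(-∞, +∞]`.
The theorem is then Gibbs' inequality `KL(μ ‖ ν) ≥ 0`, with equality iff `μ = ν`.
-/

open MeasureTheory Real
open scoped ENNReal

noncomputable section

open scoped Classical in
/-- Relative entropy `Ent_{μ₀}(μ)`, with value `⊤` when `μ` is not absolutely continuous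
with respect to `μ₀` (or the defining integral is not finite). -/
def Ent {X : Type*} [MeasurableSpace X] (μ₀ μ : Measure X) : EReal :=
  if μ ≪ μ₀ ∧ Integrable (fun x => Real.log ((μ.rnDeriv μ₀ x).toReal)) μ
  then ((∫ x, Real.log ((μ.rnDeriv μ₀ x).toReal) ∂μ : ℝ) : EReal)
  else ⊤

open InformationTheory

lemma EReal.coe_add_eq_coe_self_iff {a : ℝ} {x : EReal} : (a : EReal) + x = a ↔ x = 0 := by
  refine ⟨fun h => ?_, fun h => by rw [h, add_zero]⟩
  rw [← EReal.add_sub_cancel_left (a := x) (b := a), h, ← EReal.coe_sub, _root_.sub_self,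
    EReal.coe_zero]

section

variable {X : Type*} [MeasurableSpace X]

lemma Ent_eq_klDiv (μ₀ μ : Measure X) [IsProbabilityMeasure μ₀] [IsProbabilityMeasure μ] :
    Ent μ₀ μ = klDiv μ μ₀ := by
  unfold Ent
  split_ifs with h
  · rw [← EReal.coe_ennreal_toReal (klDiv_ne_top h.1 h.2),
      toReal_klDiv_of_measure_eq h.1 (by simp)]
    rfl
  · rw [klDiv_eq_top_iff.mpr fun hac hint => h ⟨hac, hint⟩]
    rfl

lemma integrable_llr_tilted_right_iff {μ ν : Measure X} [IsFiniteMeasure μ] [SigmaFinite ν]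
    {f : X → ℝ} (hμν : μ ≪ ν) (hfμ : Integrable f μ) (hfν : Integrable (fun x ↦ exp (f x)) ν) :
    Integrable (llr μ (ν.tilted f)) μ ↔ Integrable (llr μ ν) μ := by
  rw [integrable_congr (llr_tilted_right hμν hfν)]
  exact integrable_add_iff_integrable_right (hfμ.neg.add (integrable_const _))

lemma log_integral_exp_add_klDiv_eq {μ₀ μ : Measure X} [IsProbabilityMeasure μ₀]
    [IsProbabilityMeasure μ] {φ : X → ℝ} (hφμ : Integrable φ μ)
    (hφμ₀ : Integrable (fun x ↦ exp (φ x)) μ₀) :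
    (log (∫ x, exp (φ x) ∂μ₀) : EReal) + klDiv μ μ₀ =
      (∫ x, φ x ∂μ : ℝ) + klDiv μ (μ₀.tilted φ) := by
  have : IsProbabilityMeasure (μ₀.tilted φ) := isProbabilityMeasure_tilted hφμ₀
  by_cases hac : μ ≪ μ₀
  swap
  · have hac' : ¬ μ ≪ μ₀.tilted φ := fun h => hac (h.trans (tilted_absolutelyContinuous μ₀ φ))
    simp [klDiv_of_not_ac hac, klDiv_of_not_ac hac']
  have hac' : μ ≪ μ₀.tilted φ := hac.trans (absolutelyContinuous_tilted hφμ₀)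
  by_cases hint : Integrable (llr μ μ₀) μ
  swap
  · have hint' : ¬ Integrable (llr μ (μ₀.tilted φ)) μ := by
      rwa [integrable_llr_tilted_right_iff hac hφμ hφμ₀]
    simp [klDiv_of_not_integrable hint, klDiv_of_not_integrable hint']
  have hint' := integrable_llr_tilted_right hac hφμ hint hφμ₀
  rw [← EReal.coe_ennreal_toReal (klDiv_ne_top hac hint),
    ← EReal.coe_ennreal_toReal (klDiv_ne_top hac' hint'),
    toReal_klDiv_of_measure_eq hac (by simp), toReal_klDiv_of_measure_eq hac' (by simp),
    integral_llr_tilted_right hac hφμ hφμ₀ hint, ← EReal.coe_add, ← EReal.coe_add]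
  congr 1
  ring

end

/-- Gibbs variational principle:
`log ∫ e^φ dμ₀ + Ent_{μ₀}(μ) ≥ ∫ φ dμ`, with equality iff `μ = e^φ μ₀ / ∫ e^φ dμ₀`. -/
theorem statement17 {X : Type*} [MeasurableSpace X] (μ₀ μ : Measure X)
    [IsProbabilityMeasure μ₀] [IsProbabilityMeasure μ]
    (φ : X → ℝ) (hφm : Measurable φ) (hφb : ∃ C : ℝ, ∀ x, |φ x| ≤ C) :
    ((∫ x, φ x ∂μ : ℝ) : EReal) ≤
        ((Real.log (∫ x, Real.exp (φ x) ∂μ₀) : ℝ) : EReal) + Ent μ₀ μ ∧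
      (((Real.log (∫ x, Real.exp (φ x) ∂μ₀) : ℝ) : EReal) + Ent μ₀ μ =
          ((∫ x, φ x ∂μ : ℝ) : EReal) ↔
        μ = μ₀.withDensity fun x =>
          ENNReal.ofReal (Real.exp (φ x) / ∫ t, Real.exp (φ t) ∂μ₀)) := by
  obtain ⟨C, hC⟩ := hφb
  have hφμ : Integrable φ μ :=
    .of_bound hφm.aestronglyMeasurable C (.of_forall hC)
  have hφμ₀ : Integrable (fun x ↦ exp (φ x)) μ₀ :=
    .of_bound hφm.exp.aestronglyMeasurable (exp C) (.of_forall fun x => by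
      simpa [abs_of_pos (exp_pos _)] using (abs_le.mp (hC x)).2)
  -- `Measure.tilted` is defined as exactly this normalised density.
  change _ ∧ (_ ↔ μ = μ₀.tilted φ)
  rw [Ent_eq_klDiv, log_integral_exp_add_klDiv_eq hφμ hφμ₀, EReal.coe_add_eq_coe_self_iff,
    EReal.coe_ennreal_eq_zero, klDiv_eq_zero_iff]
  exact ⟨le_add_of_nonneg_right (EReal.coe_ennreal_nonneg _), Iff.rfl⟩
end
end
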